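/- arXiv:math/0512327 — 3 statements merged into one kernel-verified Lean document; each statement's English description precedes it below -/
import Mathlib

section
/- Let u₀ : ℝ → ℝ be bounded measurable with σ₀ := the (assumed existing, finite) limits u₀(+∞) and u₀(-∞), and let I : ℝ → ℝ be continuous with finite limits I(+∞) and I(-∞) at ±∞. Fix ν > 0 and x, and set ξ(t) = x/√(νt). Then as t → ∞, ∫_ℝ exp(-(I(√(νt)(ξ - y))/ν + y²/2)) dy converges to e^{-I(+∞)/ν} ∫_{-∞}^{ξ∞} e^{-y²/2} dy + e^{-I(-∞)/ν} ∫_{ξ∞}^{∞} e^{-y²/2} dy, where ξ∞ = lim ξ(t) = 0; i.e. the integral converges to (e^{-I(+∞)/ν} + e^{-I(-∞)/ν})·√(π/2). -/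
/-!
For `t > 0` the integrand is `exp (-I (x - s y) / ν) * exp (-y² / 2)` with `s = √(νt) → ∞`.
For `y < 0` the argument `x - s y` tends to `+∞`, for `y > 0` to `-∞`, so the first factor
converges pointwise off `y = 0` to `e^{-I(+∞)/ν}` resp. `e^{-I(-∞)/ν}`; it is bounded because
`I` is continuous with finite limits, so dominated convergence applies with a Gaussian majorant.
Each half-line carries Gaussian mass `√(π/2)`.
-/

open Real MeasureTheory Filter Set

theorem Continuous.isBounded_range_of_tendsto_atBot_atTop {α E : Type*} [LinearOrder α]
    [TopologicalSpace α] [CompactIccSpace α] [Nonempty α] [PseudoMetricSpace E] {f : α → E}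
    (hf : Continuous f) {m p : E} (hm : Tendsto f atBot (nhds m))
    (hp : Tendsto f atTop (nhds p)) : Bornology.IsBounded (range f) := by
  obtain ⟨a, ha⟩ := eventually_atBot.1 (hm.eventually (Metric.ball_mem_nhds m one_pos))
  obtain ⟨b, hb⟩ := eventually_atTop.1 (hp.eventually (Metric.ball_mem_nhds p one_pos))
  have hcover : range f ⊆ Metric.ball m 1 ∪ Metric.ball p 1 ∪ f '' Icc a b := by
    rintro _ ⟨y, rfl⟩
    rcases le_total y a with hya | hay
    · exact .inl (.inl (ha y hya))
    rcases le_total b y with hby | hyb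
    · exact .inl (.inr (hb y hby))
    · exact .inr ⟨y, ⟨hay, hyb⟩, rfl⟩
  exact ((Metric.isBounded_ball.union Metric.isBounded_ball).union
    (isCompact_Icc.image hf).isBounded).subset hcover

lemma tendsto_sub_mul_atTop_of_neg {y : ℝ} (hy : y < 0) (x : ℝ) :
    Tendsto (fun s : ℝ => x - s * y) atTop atTop := by
  simpa [sub_eq_add_neg, mul_neg] using
    tendsto_atTop_add_const_left atTop x (tendsto_id.atTop_mul_const (neg_pos.2 hy))

lemma tendsto_sub_mul_atBot_of_pos {y : ℝ} (hy : 0 < y) (x : ℝ) :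
    Tendsto (fun s : ℝ => x - s * y) atTop atBot := by
  simpa [sub_eq_add_neg, mul_neg] using
    tendsto_atBot_add_const_left atTop x (tendsto_id.atTop_mul_const_of_neg (neg_lt_zero.2 hy))

theorem tendsto_integral_comp_sub_mul_atTop {φ g : ℝ → ℝ} (hφ : Continuous φ) {p m : ℝ}
    (hp : Tendsto φ atTop (nhds p)) (hm : Tendsto φ atBot (nhds m)) (hg : Integrable g)
    (x : ℝ) :
    Tendsto (fun s => ∫ y, φ (x - s * y) * g y) atTop
      (nhds ((p * ∫ y in Iio 0, g y) + m * ∫ y in Ioi 0, g y)) := by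
  obtain ⟨C, hC⟩ :=
    isBounded_iff_forall_norm_le.1 (hφ.isBounded_range_of_tendsto_atBot_atTop hm hp)
  have hlim : Tendsto (fun s => ∫ y, φ (x - s * y) * g y) atTop
      (nhds (∫ y, (Iio 0).piecewise (fun y => p * g y) (fun y => m * g y) y)) := by
    refine tendsto_integral_filter_of_dominated_convergence (fun y => C * ‖g y‖)
      (.of_forall fun s => ((hφ.comp (by fun_prop)).aestronglyMeasurable.mul
        hg.aestronglyMeasurable)) (.of_forall fun s => .of_forall fun y => ?_)
      (hg.norm.const_mul C) ?_
    · rw [norm_mul]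
      exact mul_le_mul_of_nonneg_right (hC _ ⟨_, rfl⟩) (norm_nonneg _)
    · filter_upwards [compl_mem_ae_iff.2 (measure_singleton (0 : ℝ))] with y hy
      rcases lt_or_gt_of_ne (show y ≠ 0 from hy) with hneg | hpos
      · simpa [Set.piecewise, hneg] using
          (hp.comp (tendsto_sub_mul_atTop_of_neg hneg x)).mul_const (g y)
      · simpa [Set.piecewise, hpos.not_gt] using
          (hm.comp (tendsto_sub_mul_atBot_of_pos hpos x)).mul_const (g y)
  rwa [integral_piecewise measurableSet_Iio (hg.const_mul p).integrableOn
    (hg.const_mul m).integrableOn, compl_Iio, integral_Ici_eq_integral_Ioi,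
    integral_const_mul, integral_const_mul] at hlim

lemma integral_Ioi_exp_neg_half_mul_sq :
    ∫ y in Ioi (0 : ℝ), exp (-(1 / 2) * y ^ 2) = √(π / 2) := by
  rw [integral_gaussian_Ioi, show π / (1 / 2) = 2 ^ 2 * (π / 2) by ring,
    sqrt_mul (by positivity), sqrt_sq zero_le_two]
  ring

lemma integral_Iio_exp_neg_half_mul_sq :
    ∫ y in Iio (0 : ℝ), exp (-(1 / 2) * y ^ 2) = √(π / 2) := by
  rw [← integral_Iic_eq_integral_Iio, ← neg_zero, ← integral_comp_neg_Ioi]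
  simpa only [neg_sq] using integral_Ioi_exp_neg_half_mul_sq

theorem stmt1_general (ν x : ℝ) (hν : 0 < ν)
    (I : ℝ → ℝ) (hI : Continuous I)
    (Ip Im : ℝ) (hIp : Tendsto I atTop (nhds Ip)) (hIm : Tendsto I atBot (nhds Im)) :
    Tendsto
      (fun t : ℝ => ∫ y : ℝ,
        Real.exp (-(I (Real.sqrt (ν * t) * (x / Real.sqrt (ν * t) - y)) / ν + y^2 / 2)))
      atTop
      (nhds ((Real.exp (-Ip / ν) + Real.exp (-Im / ν)) * Real.sqrt (π / 2))) := by
  set φ : ℝ → ℝ := fun z => exp (-I z / ν)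
  have hlim := (tendsto_integral_comp_sub_mul_atTop (φ := φ) (by fun_prop)
    ((continuous_exp.tendsto _).comp (hIp.neg.div_const ν))
    ((continuous_exp.tendsto _).comp (hIm.neg.div_const ν))
    (integrable_exp_neg_mul_sq one_half_pos) x).comp
    (tendsto_sqrt_atTop.comp (tendsto_id.const_mul_atTop hν))
  rw [integral_Iio_exp_neg_half_mul_sq, integral_Ioi_exp_neg_half_mul_sq, ← add_mul] at hlim
  refine hlim.congr' ?_
  filter_upwards [eventually_gt_atTop 0] with t ht
  refine integral_congr_ae (.of_forall fun y => ?_)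
  have hs : √(ν * t) ≠ 0 := (sqrt_pos.2 (mul_pos hν ht)).ne'
  simp only [Function.comp_apply, id, φ, ← exp_add]
  congr 1
  field_simp
  ring

/-- Denominator asymptotics (eq. (2.5) at fixed `x`): after the change of
variables, `∫ exp(-(I(x - √(νt) y)/ν + y²/2)) dy` converges, as `t → ∞`,
to `(e^{-I(+∞)/ν} + e^{-I(-∞)/ν}) √(π/2)` (here `ξ(t) = x/√(νt) → 0`). -/
theorem stmt1 (ν x : ℝ) (hν : 0 < ν)
    (u₀ : ℝ → ℝ) (hu₀m : Measurable u₀) (hu₀b : ∃ M, ∀ y, |u₀ y| ≤ M)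
    (u₀p u₀m : ℝ) (hu₀p : Tendsto u₀ atTop (nhds u₀p))
    (hu₀m' : Tendsto u₀ atBot (nhds u₀m))
    (I : ℝ → ℝ) (hI : Continuous I)
    (Ip Im : ℝ) (hIp : Tendsto I atTop (nhds Ip)) (hIm : Tendsto I atBot (nhds Im)) :
    Tendsto
      (fun t : ℝ => ∫ y : ℝ,
        Real.exp (-(I (Real.sqrt (ν * t) * (x / Real.sqrt (ν * t) - y)) / ν + y^2 / 2)))
      atTop
      (nhds ((Real.exp (-Ip / ν) + Real.exp (-Im / ν)) * Real.sqrt (π / 2))) :=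
  stmt1_general ν x hν I hI Ip Im hIp hIm
end

section
/- Let I : ℝ → ℝ be continuous with finite limits I(±∞), let g : ℝ → ℝ be bounded measurable with finite limits g(±∞), and fix ν > 0. Then for each fixed x ∈ ℝ, lim_{t→∞} [∫_ℝ g(y) e^{-(1/ν)(I(y)+(x-y)²/(2t))} dy] / [∫_ℝ e^{-(1/ν)(I(y)+(x-y)²/(2t))} dy] = (g(+∞) e^{-I(+∞)/ν} + g(-∞) e^{-I(-∞)/ν}) / (e^{-I(+∞)/ν} + e^{-I(-∞)/ν}). -/
open Real MeasureTheory Filter Set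

private lemma sqrt_tendsto_atTop' : Tendsto Real.sqrt atTop atTop := by
  rw [tendsto_atTop_atTop]
  intro c
  refine ⟨(max c 0)^2, fun a ha => ?_⟩
  calc c ≤ max c 0 := le_max_left _ _
    _ = Real.sqrt ((max c 0)^2) := (Real.sqrt_sq (le_max_right _ _)).symm
    _ ≤ Real.sqrt a := Real.sqrt_le_sqrt ha

private lemma exists_lb {I : ℝ → ℝ} (hI : Continuous I) {Ip Im : ℝ}
    (hIp : Tendsto I atTop (nhds Ip)) (hIm : Tendsto I atBot (nhds Im)) :
    ∃ m, ∀ y, m ≤ I y := by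
  obtain ⟨A, hA⟩ := eventually_atTop.1 (hIp.eventually (eventually_gt_nhds (sub_one_lt Ip)))
  obtain ⟨B, hB⟩ := eventually_atBot.1 (hIm.eventually (eventually_gt_nhds (sub_one_lt Im)))
  obtain ⟨y0, -, hy0⟩ := isCompact_Icc.exists_isMinOn (Set.nonempty_Icc.2 (min_le_right B A))
    (hI.continuousOn (s := Icc (min B A) A))
  refine ⟨min (min (Ip - 1) (Im - 1)) (I y0), fun y => ?_⟩
  rcases le_or_gt y (min B A) with h | h
  · exact le_trans (min_le_left _ _) (le_trans (min_le_right _ _)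
      (hB y (h.trans (min_le_left _ _))).le)
  rcases le_or_gt y A with h2 | h2
  · exact le_trans (min_le_right _ _) (hy0 ⟨h.le, h2⟩)
  · exact le_trans (min_le_left _ _) (le_trans (min_le_left _ _) (hA y h2.le).le)

/-- Key dominated-convergence step. -/
private lemma key (ν x : ℝ) (hν : 0 < ν)
    (I : ℝ → ℝ) (hI : Continuous I)
    (Ip Im : ℝ) (hIp : Tendsto I atTop (nhds Ip)) (hIm : Tendsto I atBot (nhds Im))
    (g : ℝ → ℝ) (hgm : Measurable g) (hgb : ∃ M, ∀ y, |g y| ≤ M)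
    (gp gm : ℝ) (hgp : Tendsto g atTop (nhds gp)) (hgm' : Tendsto g atBot (nhds gm)) :
    Tendsto (fun s : ℝ => ∫ z : ℝ,
        g (x + s * z) * Real.exp (-(I (x + s * z)) / ν) * Real.exp (-(1/(2*ν)) * z^2))
      atTop
      (nhds ((gp * Real.exp (-Ip / ν) + gm * Real.exp (-Im / ν)) *
        ∫ z in Ioi (0:ℝ), Real.exp (-(1/(2*ν)) * z^2))) := by
  obtain ⟨M, hM⟩ := hgb
  obtain ⟨m, hm⟩ := exists_lb hI hIp hIm
  have hb : (0:ℝ) < 1/(2*ν) := by positivity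
  set w : ℝ → ℝ := fun z => Real.exp (-(1/(2*ν)) * z^2) with hw
  have hwint : Integrable w := integrable_exp_neg_mul_sq hb
  have hwcont : Continuous w := by fun_prop
  set c1 : ℝ := gp * Real.exp (-Ip / ν) with hc1
  set c2 : ℝ := gm * Real.exp (-Im / ν) with hc2
  set flim : ℝ → ℝ := fun z => (if 0 < z then c1 else c2) * w z with hf
  have hflim_meas : Measurable flim :=
    (Measurable.ite measurableSet_Ioi measurable_const measurable_const).mul hwcont.measurable
  have hflim_int : Integrable flim := by
    apply (hwint.const_mul (|c1| + |c2|)).mono' hflim_meas.aestronglyMeasurable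
    filter_upwards with z
    rw [Real.norm_eq_abs, hf]
    simp only [abs_mul]
    have hwpos : 0 < w z := Real.exp_pos _
    rw [abs_of_pos hwpos]
    apply mul_le_mul_of_nonneg_right _ hwpos.le
    split
    · exact le_add_of_nonneg_right (abs_nonneg _)
    · exact le_add_of_nonneg_left (abs_nonneg _)
  have hsym : ∫ z in Iic (0:ℝ), w z = ∫ z in Ioi (0:ℝ), w z := by
    have h := integral_comp_neg_Iic (0:ℝ) w
    simp only [hw, neg_sq, neg_zero] at h
    exact h
  have hIioi : ∫ z in Ioi (0:ℝ), flim z = c1 * ∫ z in Ioi (0:ℝ), w z := by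
    rw [show ∫ z in Ioi (0:ℝ), flim z = ∫ z in Ioi (0:ℝ), c1 * w z from
      setIntegral_congr_fun measurableSet_Ioi (fun z hz => by
        simp [hf, if_pos (mem_Ioi.1 hz)])]
    exact integral_const_mul _ _
  have hIiic : ∫ z in Iic (0:ℝ), flim z = c2 * ∫ z in Ioi (0:ℝ), w z := by
    rw [show ∫ z in Iic (0:ℝ), flim z = ∫ z in Iic (0:ℝ), c2 * w z from
      setIntegral_congr_fun measurableSet_Iic (fun z hz => by
        simp [hf, if_neg (not_lt.2 (mem_Iic.1 hz))])]
    rw [integral_const_mul, hsym]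
  have hflim_val : ∫ z, flim z = (c1 + c2) * ∫ z in Ioi (0:ℝ), w z := by
    rw [← intervalIntegral.integral_Iic_add_Ioi hflim_int.integrableOn hflim_int.integrableOn, hIiic, hIioi]
    ring
  rw [← hflim_val]
  apply tendsto_integral_filter_of_dominated_convergence
    (fun z => (M * Real.exp (-m / ν)) * w z)
  · filter_upwards with s
    have haff : Measurable fun z : ℝ => x + s * z := (measurable_id.const_mul s).const_add x
    exact (((hgm.comp haff).mul
      ((Real.continuous_exp.comp ((hI.comp
        (continuous_const.add (continuous_const.mul continuous_id))).neg.div_const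
        ν)).measurable)).mul hwcont.measurable).aestronglyMeasurable
  · filter_upwards with s
    filter_upwards with z
    have h1 : |g (x + s*z)| ≤ M := hM _
    have h2 : Real.exp (-(I (x + s*z)) / ν) ≤ Real.exp (-m / ν) :=
      Real.exp_le_exp.2 ((div_le_div_iff_of_pos_right hν).2 (neg_le_neg (hm _)))
    have hwpos : 0 < w z := Real.exp_pos _
    have hM0 : (0:ℝ) ≤ M := le_trans (abs_nonneg _) (hM 0)
    rw [Real.norm_eq_abs, abs_mul, abs_mul, abs_of_pos hwpos, abs_of_pos (Real.exp_pos _)]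
    apply mul_le_mul_of_nonneg_right _ hwpos.le
    exact mul_le_mul h1 h2 (Real.exp_pos _).le hM0
  · exact hwint.const_mul _
  · have h0 : ∀ᵐ z : ℝ, z ≠ (0:ℝ) := by
      refine (ae_iff).2 ?_
      simp only [not_not]
      have he : {z : ℝ | z = 0} = {(0:ℝ)} := by ext z; simp
      rw [he]
      exact Real.volume_singleton
    filter_upwards [h0] with z hz
    rcases hz.lt_or_gt with hneg | hpos
    · have haff : Tendsto (fun s : ℝ => x + s * z) atTop atBot :=
        tendsto_atBot_add_const_left _ x (tendsto_id.atTop_mul_const_of_neg hneg)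
      have hIl : Tendsto (fun s : ℝ => Real.exp (-(I (x + s * z)) / ν)) atTop
          (nhds (Real.exp (-Im / ν))) :=
        (Real.continuous_exp.tendsto _).comp (((hIm.comp haff).neg).div_const ν)
      have := ((hgm'.comp haff).mul hIl).mul (tendsto_const_nhds (x := w z))
      rw [hf]
      simp only [if_neg (not_lt.2 hneg.le)]
      exact this
    · have haff : Tendsto (fun s : ℝ => x + s * z) atTop atTop :=
        tendsto_atTop_add_const_left _ x (tendsto_id.atTop_mul_const hpos)
      have hIl : Tendsto (fun s : ℝ => Real.exp (-(I (x + s * z)) / ν)) atTop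
          (nhds (Real.exp (-Ip / ν))) :=
        (Real.continuous_exp.tendsto _).comp (((hIp.comp haff).neg).div_const ν)
      have := ((hgp.comp haff).mul hIl).mul (tendsto_const_nhds (x := w z))
      rw [hf]
      simp only [if_pos hpos]
      exact this

private lemma changevar (ν x : ℝ) (hν : 0 < ν) {t : ℝ} (ht : 0 < t) (I G : ℝ → ℝ) :
    (∫ y : ℝ, G y * Real.exp (-(1/ν) * (I y + (x - y)^2 / (2*t))))
      = |Real.sqrt t| * ∫ z : ℝ, G (x + Real.sqrt t * z) *
          Real.exp (-(I (x + Real.sqrt t * z)) / ν) * Real.exp (-(1/(2*ν)) * z^2) := by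
  set s := Real.sqrt t with hs
  have hs0 : 0 < s := Real.sqrt_pos.2 ht
  have hs2 : s^2 = t := Real.sq_sqrt ht.le
  set P : ℝ → ℝ := fun y => G y * Real.exp (-(1/ν) * (I y + (x - y)^2 / (2*t))) with hP
  have step1 : (∫ y : ℝ, P y) = ∫ u : ℝ, P (x + u) :=
    (MeasureTheory.integral_add_left_eq_self P x).symm
  have step2 : (∫ z : ℝ, P (x + s * z)) = |s⁻¹| • ∫ u : ℝ, P (x + u) :=
    MeasureTheory.Measure.integral_comp_mul_left (fun u => P (x + u)) s
  have hptw : ∀ z : ℝ, P (x + s * z)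
      = G (x + s * z) * Real.exp (-(I (x + s * z)) / ν) * Real.exp (-(1/(2*ν)) * z^2) := by
    intro z
    simp only [hP]
    have hq : (x - (x + s * z))^2 = t * z^2 := by rw [← hs2]; ring
    have hexp : -(1/ν) * (I (x + s * z) + (x - (x + s * z))^2 / (2*t))
        = -(I (x + s * z)) / ν + (-(1/(2*ν)) * z^2) := by
      rw [hq]
      field_simp
      ring
    rw [hexp, Real.exp_add, mul_assoc]
  rw [step1]
  have hstep : (∫ u : ℝ, P (x + u)) = |s| * ∫ z : ℝ, P (x + s * z) := by
    rw [step2, smul_eq_mul, ← mul_assoc, abs_inv, mul_inv_cancel₀ (by positivity), one_mul]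
  rw [hstep]
  congr 1
  exact integral_congr_ae (Filter.Eventually.of_forall hptw)

/-- Theorem 2.1 at a fixed spatial point `x`: the Hopf--Cole solution converges,
as `t → ∞`, to the weighted average of `g(±∞)` with weights `e^{-I(±∞)/ν}`. -/
theorem stmt2 (ν x : ℝ) (hν : 0 < ν)
    (I : ℝ → ℝ) (hI : Continuous I)
    (Ip Im : ℝ) (hIp : Tendsto I atTop (nhds Ip)) (hIm : Tendsto I atBot (nhds Im))
    (g : ℝ → ℝ) (hgm : Measurable g) (hgb : ∃ M, ∀ y, |g y| ≤ M)
    (gp gm : ℝ) (hgp : Tendsto g atTop (nhds gp)) (hgm' : Tendsto g atBot (nhds gm)) :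
    Tendsto
      (fun t : ℝ =>
        (∫ y : ℝ, g y * Real.exp (-(1/ν) * (I y + (x - y)^2 / (2*t)))) /
        (∫ y : ℝ, Real.exp (-(1/ν) * (I y + (x - y)^2 / (2*t)))))
      atTop
      (nhds ((gp * Real.exp (-Ip / ν) + gm * Real.exp (-Im / ν)) /
        (Real.exp (-Ip / ν) + Real.exp (-Im / ν)))) := by
  set c : ℝ := ∫ z in Ioi (0:ℝ), Real.exp (-(1/(2*ν)) * z^2) with hcdef
  have hc : 0 < c := by
    rw [hcdef, integral_gaussian_Ioi]
    have : (0:ℝ) < π / (1/(2*ν)) := by positivity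
    positivity
  have hEp : 0 < Real.exp (-Ip / ν) := Real.exp_pos _
  have hEm : 0 < Real.exp (-Im / ν) := Real.exp_pos _
  have h1 := key ν x hν I hI Ip Im hIp hIm g hgm hgb gp gm hgp hgm'
  have h2 := key ν x hν I hI Ip Im hIp hIm (fun _ => 1) measurable_const
    ⟨1, fun y => by norm_num⟩ 1 1 tendsto_const_nhds tendsto_const_nhds
  simp only [one_mul] at h2
  have hden_ne : (Real.exp (-Ip / ν) + Real.exp (-Im / ν)) * c ≠ 0 := by positivity
  have hdiv := (h1.div h2 hden_ne).comp sqrt_tendsto_atTop'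
  rw [mul_div_mul_right _ _ hc.ne'] at hdiv
  apply hdiv.congr'
  filter_upwards [eventually_ge_atTop (1:ℝ)] with t ht
  have ht0 : 0 < t := lt_of_lt_of_le one_pos ht
  have hs0 : 0 < Real.sqrt t := Real.sqrt_pos.2 ht0
  have e1 := changevar ν x hν ht0 I g
  have e2 := changevar ν x hν ht0 I (fun _ => 1)
  simp only [one_mul] at e2
  simp only [Function.comp_apply, Pi.div_apply]
  rw [e1, e2, mul_div_mul_left _ _ (by positivity : |Real.sqrt t| ≠ 0)]
end

section
/- Let I : ℝ → ℝ be continuous with finite limits I(±∞), let g : ℝ → ℝ be bounded measurable with finite limits g(±∞), and fix ν > 0 and ξ ∈ ℝ. Then along the path x = ξ√(νt), lim_{t→∞} [∫_ℝ g(y) e^{-(1/ν)(I(y)+(x-y)²/(2t))} dy] / [∫_ℝ e^{-(1/ν)(I(y)+(x-y)²/(2t))} dy] = (g(+∞) e^{-I(+∞)/ν} ∫_{-∞}^{ξ} e^{-y²/2} dy + g(-∞) e^{-I(-∞)/ν} ∫_{ξ}^{∞} e^{-y²/2} dy) / (e^{-I(+∞)/ν} ∫_{-∞}^{ξ} e^{-y²/2}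 dy + e^{-I(-∞)/ν} ∫_{ξ}^{∞} e^{-y²/2} dy). -/
/-!
Substituting `y = √(νt) z` turns numerator and denominator into `√(νt)` times
`∫ h (√(νt) z) e^{-(ξ - z)²/2} dz`, with `h = g e^{-I/ν}` and `h = e^{-I/ν}` respectively.
As `√(νt) → ∞`, `h (√(νt) z)` tends to `h(+∞)` for `z > 0` and to `h(-∞)` for `z < 0`; since `h`
is bounded (`I` is continuous with finite limits), dominated convergence gives the limit
`h(+∞) ∫_{-∞}^ξ e^{-y²/2} dy + h(-∞) ∫_ξ^∞ e^{-y²/2} dy`, which is positive for the denominator.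
-/

open Real MeasureTheory Filter Set Topology

theorem Continuous.exists_forall_abs_le_of_tendsto {f : ℝ → ℝ} (hf : Continuous f) {a b : ℝ}
    (ha : Tendsto f atTop (𝓝 a)) (hb : Tendsto f atBot (𝓝 b)) : ∃ C, ∀ y, |f y| ≤ C := by
  obtain ⟨C, hC⟩ := isBounded_iff_forall_norm_le.mp
    (hf.isBounded_range_iff_isBigO_atTop_atBot.mpr ⟨ha.isBigO_one ℝ, hb.isBigO_one ℝ⟩)
  exact ⟨C, fun y => hC _ (mem_range_self y)⟩

theorem setIntegral_exp_pos {α : Type*} [MeasurableSpace α] {μ : Measure α} {s : Set α}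
    (hs : μ s ≠ 0) {f : α → ℝ} (hf : IntegrableOn (fun x => exp (f x)) s μ) :
    0 < ∫ x in s, exp (f x) ∂μ := by
  have : NeZero (μ.restrict s) := ⟨by simpa [Measure.restrict_eq_zero] using hs⟩
  exact integral_exp_pos hf

theorem integrable_exp_neg_sq_div_two : Integrable fun y : ℝ => exp (-y ^ 2 / 2) := by
  simpa [neg_div, div_eq_inv_mul] using integrable_exp_neg_mul_sq (b := 1 / 2) (by norm_num)

section Reflection

variable {E : Type*} [NormedAddCommGroup E] [NormedSpace ℝ E]

theorem setIntegral_Ioi_zero_comp_sub_left (f : ℝ → E) (c : ℝ) :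
    ∫ z in Ioi 0, f (c - z) = ∫ y in Iic c, f y := by
  rw [← integral_Ici_eq_integral_Ioi,
    ← (Measure.measurePreserving_sub_left volume c).setIntegral_preimage_emb
      (Homeomorph.subLeft c).measurableEmbedding f (Iic c)]
  simp

theorem setIntegral_Iio_zero_comp_sub_left (f : ℝ → E) (c : ℝ) :
    ∫ z in Iio 0, f (c - z) = ∫ y in Ici c, f y := by
  rw [integral_Ici_eq_integral_Ioi,
    ← (Measure.measurePreserving_sub_left volume c).setIntegral_preimage_emb
      (Homeomorph.subLeft c).measurableEmbedding f (Ioi c)]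
  simp

end Reflection

section Rescaling

variable {α : Type*} {l : Filter α} [l.IsCountablyGenerated] {s : α → ℝ}
  {h : ℝ → ℝ} {C a b : ℝ}

theorem tendsto_integral_comp_mul_smul {E : Type*} [NormedAddCommGroup E] [NormedSpace ℝ E]
    (hs : Tendsto s l atTop) (hm : Measurable h) (hC : ∀ y, |h y| ≤ C)
    (ha : Tendsto h atTop (𝓝 a)) (hb : Tendsto h atBot (𝓝 b)) {ψ : ℝ → E} (hψ : Integrable ψ) :
    Tendsto (fun t => ∫ z, h (s t * z) • ψ z) l
      (𝓝 (a • (∫ z in Ioi 0, ψ z) + b • ∫ z in Iio 0, ψ z)) := by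
  have hlim : ∫ z, ((Ioi 0).indicator (a • ψ) z + (Iio 0).indicator (b • ψ) z)
      = a • (∫ z in Ioi 0, ψ z) + b • ∫ z in Iio 0, ψ z := by
    rw [integral_add ((hψ.smul a).indicator measurableSet_Ioi)
        ((hψ.smul b).indicator measurableSet_Iio),
      integral_indicator measurableSet_Ioi, integral_indicator measurableSet_Iio]
    simp only [Pi.smul_apply, integral_smul]
  rw [← hlim]
  refine tendsto_integral_filter_of_dominated_convergence (fun z => C * ‖ψ z‖)
    (Eventually.of_forall fun t => (hm.comp (measurable_const_mul (s t))).aestronglyMeasurable.smul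
      hψ.aestronglyMeasurable)
    (Eventually.of_forall fun t => Eventually.of_forall fun z => ?_) (hψ.norm.const_mul C) ?_
  · rw [norm_smul, Real.norm_eq_abs]
    exact mul_le_mul_of_nonneg_right (hC _) (norm_nonneg _)
  · filter_upwards [compl_mem_ae_iff.mpr (measure_singleton (μ := volume) (0 : ℝ))] with z hz
    rcases Ne.lt_or_gt hz with hz | hz
    · simpa [hz, hz.not_gt] using (hb.comp (hs.atTop_mul_const_of_neg hz)).smul_const (ψ z)
    · simpa [hz, hz.not_gt] using (ha.comp (hs.atTop_mul_const hz)).smul_const (ψ z)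

theorem tendsto_integral_comp_mul_mul_sub (hs : Tendsto s l atTop) (hm : Measurable h)
    (hC : ∀ y, |h y| ≤ C) (ha : Tendsto h atTop (𝓝 a)) (hb : Tendsto h atBot (𝓝 b))
    {φ : ℝ → ℝ} (hφ : Integrable φ) (ξ : ℝ) :
    Tendsto (fun t => ∫ z, h (s t * z) * φ (ξ - z)) l
      (𝓝 (a * (∫ y in Iic ξ, φ y) + b * (∫ y in Ici ξ, φ y))) := by
  simpa only [setIntegral_Ioi_zero_comp_sub_left, setIntegral_Iio_zero_comp_sub_left, smul_eq_mul]
    using tendsto_integral_comp_mul_smul hs hm hC ha hb (hφ.comp_sub_left ξ)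

end Rescaling

theorem integral_mul_exp_hopfCole_eq_sqrt_mul (F I : ℝ → ℝ) {ν t : ℝ} (hν : 0 < ν) (ht : 0 < t)
    (ξ : ℝ) :
    ∫ y, F y * exp (-(1 / ν) * (I y + (ξ * √(ν * t) - y) ^ 2 / (2 * t))) =
      √(ν * t) * ∫ z, F (√(ν * t) * z) * exp (-I (√(ν * t) * z) / ν) * exp (-(ξ - z) ^ 2 / 2) := by
  have hc : 0 < √(ν * t) := sqrt_pos.mpr (mul_pos hν ht)
  have hc2 : √(ν * t) ^ 2 = ν * t := sq_sqrt (mul_pos hν ht).le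
  set c := √(ν * t)
  calc _ = c * ∫ z, F (c * z) * exp (-(1 / ν) * (I (c * z) + (ξ * c - c * z) ^ 2 / (2 * t))) := by
        rw [Measure.integral_comp_mul_left
            (fun y => F y * exp (-(1 / ν) * (I y + (ξ * c - y) ^ 2 / (2 * t)))),
          abs_of_pos (inv_pos.mpr hc), smul_eq_mul, mul_inv_cancel_left₀ hc.ne']
    _ = _ := by
        congr 1
        refine integral_congr_ae (Eventually.of_forall fun z => ?_)
        simp only
        rw [mul_assoc, ← exp_add, show (ξ * c - c * z) ^ 2 = c ^ 2 * (ξ - z) ^ 2 by ring, hc2]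
        congr 2
        field_simp
        ring

/-- Theorem 2.1: along the self-similar path `x = ξ√(νt)`, the Hopf--Cole
solution converges, as `t → ∞`, to the self-similar profile in `ξ`. -/
theorem stmt3 (ν ξ : ℝ) (hν : 0 < ν)
    (I : ℝ → ℝ) (hI : Continuous I)
    (Ip Im : ℝ) (hIp : Tendsto I atTop (nhds Ip)) (hIm : Tendsto I atBot (nhds Im))
    (g : ℝ → ℝ) (hgm : Measurable g) (hgb : ∃ M, ∀ y, |g y| ≤ M)
    (gp gm : ℝ) (hgp : Tendsto g atTop (nhds gp)) (hgm' : Tendsto g atBot (nhds gm)) :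
    Tendsto
      (fun t : ℝ =>
        (∫ y : ℝ, g y *
          Real.exp (-(1/ν) * (I y + (ξ * Real.sqrt (ν * t) - y)^2 / (2*t)))) /
        (∫ y : ℝ,
          Real.exp (-(1/ν) * (I y + (ξ * Real.sqrt (ν * t) - y)^2 / (2*t)))))
      atTop
      (nhds
        ((gp * Real.exp (-Ip / ν) * (∫ y in Set.Iic ξ, Real.exp (-y^2 / 2)) +
          gm * Real.exp (-Im / ν) * (∫ y in Set.Ici ξ, Real.exp (-y^2 / 2))) /
         (Real.exp (-Ip / ν) * (∫ y in Set.Iic ξ, Real.exp (-y^2 / 2)) +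
          Real.exp (-Im / ν) * (∫ y in Set.Ici ξ, Real.exp (-y^2 / 2))))) := by
  obtain ⟨M, hM⟩ := hgb
  obtain ⟨B, hB⟩ := hI.exists_forall_abs_le_of_tendsto hIp hIm
  have hw : ∀ y, |exp (-I y / ν)| ≤ exp (B / ν) := fun y => by
    rw [abs_of_pos (exp_pos _)]
    exact exp_le_exp.mpr (div_le_div_of_nonneg_right ((neg_le_abs _).trans (hB y)) hν.le)
  have hgw : ∀ y, |g y * exp (-I y / ν)| ≤ M * exp (B / ν) := fun y => by
    rw [abs_mul]
    exact mul_le_mul (hM y) (hw y) (abs_nonneg _) ((abs_nonneg _).trans (hM y))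
  have hw_meas : Measurable fun y => exp (-I y / ν) := (hI.measurable.neg.div_const ν).exp
  have hs : Tendsto (fun t => √(ν * t)) atTop atTop :=
    tendsto_sqrt_atTop.comp (tendsto_id.const_mul_atTop hν)
  have hnum := tendsto_integral_comp_mul_mul_sub hs (hgm.mul hw_meas) hgw
    (hgp.mul (hIp.neg.div_const ν).rexp) (hgm'.mul (hIm.neg.div_const ν).rexp)
    integrable_exp_neg_sq_div_two ξ
  have hden := tendsto_integral_comp_mul_mul_sub hs hw_meas hw
    (hIp.neg.div_const ν).rexp (hIm.neg.div_const ν).rexp integrable_exp_neg_sq_div_two ξ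
  have hpos : 0 < exp (-Ip / ν) * (∫ y in Iic ξ, exp (-y ^ 2 / 2)) +
      exp (-Im / ν) * (∫ y in Ici ξ, exp (-y ^ 2 / 2)) := by
    have := setIntegral_exp_pos (s := Iic ξ) (by simp) integrable_exp_neg_sq_div_two.integrableOn
    have := setIntegral_exp_pos (s := Ici ξ) (by simp) integrable_exp_neg_sq_div_two.integrableOn
    positivity
  refine (hnum.div hden hpos.ne').congr' ?_
  filter_upwards [eventually_gt_atTop 0] with t ht
  have hden_eq := integral_mul_exp_hopfCole_eq_sqrt_mul (fun _ => 1) I hν ht ξ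
  simp only [one_mul] at hden_eq
  rw [integral_mul_exp_hopfCole_eq_sqrt_mul g I hν ht ξ, hden_eq,
    mul_div_mul_left _ _ (sqrt_pos.mpr (mul_pos hν ht)).ne']
  rfl
end
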